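/- arXiv:1603.00644 — 2 statements merged into one kernel-verified Lean document; each statement's English description precedes it below -/
import Mathlib

section
/- Let G = F^{⊗n} over GF(2) and let A ⊆ {0,…,2^n−1} be closed under bitwise domination. Then the submatrix G_{AA}, with rows and columns of A listed in increasing order, is lower triangular with unit diagonal, and moreover G_{AA} · G_{AA} = I over GF(2) (G_{AA} is an involution). -/
/-- G = F^{⊗n} over GF(2), given by its entry characterization:
G(i,j) = 1 iff (i AND j) = j. -/
def G (n : ℕ) : Matrix (Fin (2 ^ n)) (Fin (2 ^ n)) (ZMod 2) :=
  fun i j => if i.val &&& j.val = j.val then 1 else 0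

/-- Binary Hamming weight of a natural number. -/
def wt (m : ℕ) : ℕ := (Nat.digits 2 m).count 1

lemma dom_iff (i j : ℕ) : i &&& j = j ↔ ∀ b, j.testBit b = true → i.testBit b = true := by
  constructor
  · intro h b hb
    have h2 := congrArg (Nat.testBit · b) h
    simp only [Nat.testBit_and, hb, Bool.and_true] at h2
    exact h2
  · intro h
    apply Nat.eq_of_testBit_eq
    intro b
    simp only [Nat.testBit_and]
    cases hj : j.testBit b
    · simp
    · simp [h b hj]

lemma dom_trans {i j k : ℕ} (h1 : i &&& j = j) (h2 : j &&& k = k) : i &&& k = k := by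
  rw [dom_iff] at *
  exact fun b hb => h1 b (h2 b hb)

lemma dom_antisymm {i j : ℕ} (h1 : i &&& j = j) (h2 : j &&& i = i) : i = j := by
  have : j ≤ i := h1 ▸ Nat.and_le_left
  have : i ≤ j := h2 ▸ Nat.and_le_left
  omega

/-- If A is closed under bitwise domination, G_{AA} (rows/columns of A in
increasing order) is lower triangular with unit diagonal and is an involution. -/
theorem subm_AA_triangular_involution (n : ℕ) (A : Finset (Fin (2 ^ n)))
    (hA : ∀ j ∈ A, ∀ i : Fin (2 ^ n), i.val &&& j.val = j.val → i ∈ A) :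
    let GAA : Matrix A A (ZMod 2) := Matrix.of fun i j => G n i.val j.val
    (∀ i j : A, (i : Fin (2 ^ n)) < (j : Fin (2 ^ n)) → GAA i j = 0) ∧
    (∀ i : A, GAA i i = 1) ∧
    GAA * GAA = 1 := by
  intro GAA
  refine ⟨?_, ?_, ?_⟩
  · intro i j hij
    simp only [GAA, Matrix.of_apply, G]
    rw [if_neg]
    intro h
    have : (j : Fin (2 ^ n)).val ≤ (i : Fin (2 ^ n)).val := h ▸ Nat.and_le_left
    exact absurd hij (by simp [Fin.lt_def]; omega)
  · intro i
    simp [GAA, G, Nat.and_self]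
  · ext i k
    rw [Matrix.mul_apply, Matrix.one_apply]
    -- rewrite sum over subtype as sum over all of Fin (2^n)
    have hext : ∑ j : A, GAA i j * GAA j k
        = ∑ j : Fin (2 ^ n), G n i.val j * G n j k.val := by
      simp only [GAA, Matrix.of_apply]
      rw [Finset.sum_coe_sort A (fun j => G n i.val j * G n j k.val)]
      apply Finset.sum_subset (Finset.subset_univ A)
      intro j _ hj
      by_cases h : j.val &&& (k : Fin (2 ^ n)).val = (k : Fin (2 ^ n)).val
      · exact absurd (hA k.val k.prop j h) hj
      · simp [G, h]
    rw [hext]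
    by_cases hik : (i : A) = k
    · subst hik
      rw [if_pos rfl]
      have hterm : ∀ j : Fin (2 ^ n),
          G n i.val j * G n j i.val = if j = i.val then 1 else 0 := by
        intro j
        by_cases h : j = i.val
        · subst h; simp [G, Nat.and_self]
        · simp only [G]
          by_cases h1 : (i : Fin (2 ^ n)).val &&& j.val = j.val
          · by_cases h2 : j.val &&& (i : Fin (2 ^ n)).val = (i : Fin (2 ^ n)).val
            · exact absurd (Fin.ext (dom_antisymm h2 h1)) h
            · simp [h1, h2, h]
          · simp [h1, h]
      simp only [hterm]
      simp
    · rw [if_neg hik]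
      by_cases hdom : (i : Fin (2 ^ n)).val &&& (k : Fin (2 ^ n)).val
          = (k : Fin (2 ^ n)).val
      · -- k ⊆ i, i ≠ k : pairing involution on a differing bit b
        have hne : (i : Fin (2 ^ n)).val ≠ (k : Fin (2 ^ n)).val := by
          intro h; exact hik (Subtype.ext (Fin.ext h))
        obtain ⟨b, hb⟩ : ∃ b, (i : Fin (2 ^ n)).val.testBit b ≠ (k : Fin (2 ^ n)).val.testBit b := by
          by_contra h
          push_neg at h
          exact hne (Nat.eq_of_testBit_eq h)
        have hib : (i : Fin (2 ^ n)).val.testBit b = true := by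
          cases hi' : (i : Fin (2 ^ n)).val.testBit b
          · cases hk' : (k : Fin (2 ^ n)).val.testBit b
            · rw [hi', hk'] at hb; exact absurd rfl hb
            · exact absurd ((dom_iff _ _).1 hdom b hk') (by simp [hi'])
          · rfl
        have hkb : (k : Fin (2 ^ n)).val.testBit b = false := by
          cases hk' : (k : Fin (2 ^ n)).val.testBit b
          · rfl
          · rw [hib, hk'] at hb; exact absurd rfl hb
        have hbn : 2 ^ b < 2 ^ n := by
          by_contra h
          push_neg at h
          have : (i : Fin (2 ^ n)).val < 2 ^ b :=
            lt_of_lt_of_le (i : Fin (2 ^ n)).isLt h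
          rw [Nat.testBit_lt_two_pow this] at hib
          exact absurd hib (by simp)
        -- the involution
        refine Finset.sum_involution
          (fun j _ => ⟨j.val ^^^ 2 ^ b, Nat.xor_lt_two_pow j.isLt hbn⟩) ?_ ?_ (fun _ _ => Finset.mem_univ _) ?_
        · intro j _
          have key : G n (i : Fin (2 ^ n)) ⟨j.val ^^^ 2 ^ b, Nat.xor_lt_two_pow j.isLt hbn⟩
              * G n ⟨j.val ^^^ 2 ^ b, Nat.xor_lt_two_pow j.isLt hbn⟩ (k : Fin (2 ^ n))
              = G n (i : Fin (2 ^ n)) j * G n j (k : Fin (2 ^ n)) := by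
            have e1 : ((i : Fin (2 ^ n)).val &&& (j.val ^^^ 2 ^ b) = j.val ^^^ 2 ^ b)
                ↔ ((i : Fin (2 ^ n)).val &&& j.val = j.val) := by
              rw [dom_iff, dom_iff]
              constructor
              · intro h c hc
                by_cases hcb : c = b
                · subst hcb; exact hib
                · refine h c ?_
                  rw [Nat.testBit_xor, hc, Nat.testBit_two_pow]
                  simp [Ne.symm hcb]
              · intro h c hc
                rw [Nat.testBit_xor, Nat.testBit_two_pow] at hc
                by_cases hcb : c = b
                · subst hcb; exact hib
                · simp [Ne.symm hcb] at hc
                  exact h c hc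
            have e2 : ((j.val ^^^ 2 ^ b) &&& (k : Fin (2 ^ n)).val = (k : Fin (2 ^ n)).val)
                ↔ (j.val &&& (k : Fin (2 ^ n)).val = (k : Fin (2 ^ n)).val) := by
              rw [dom_iff, dom_iff]
              constructor
              · intro h c hc
                have := h c hc
                rw [Nat.testBit_xor, Nat.testBit_two_pow] at this
                by_cases hcb : c = b
                · subst hcb; rw [hkb] at hc; exact absurd hc (by simp)
                · simpa [Ne.symm hcb] using this
              · intro h c hc
                rw [Nat.testBit_xor, Nat.testBit_two_pow]
                by_cases hcb : c = b
                · subst hcb; rw [hkb] at hc; exact absurd hc (by simp)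
                · simp [Ne.symm hcb]
                  exact h c hc
            simp only [G]
            simp only [e1, e2]
          simp only [key]
          have : ∀ x : ZMod 2, x + x = 0 := by decide
          exact this _
        · intro j _ _
          intro h
          have := congrArg (fun x : Fin (2 ^ n) => x.val.testBit b) h
          simp only [Nat.testBit_xor, Nat.testBit_two_pow] at this
          simp at this
        · intro j _
          apply Fin.ext
          simp [Nat.xor_assoc]
      · -- not k ⊆ i : all terms vanish
        apply Finset.sum_eq_zero
        intro j _
        by_cases h1 : (i : Fin (2 ^ n)).val &&& j.val = j.val
        · by_cases h2 : j.val &&& (k : Fin (2 ^ n)).val = (k : Fin (2 ^ n)).val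
          · exact absurd (dom_trans h1 h2) hdom
          · simp [G, h2]
        · simp [G, h1]
end

section
/- Let G = F^{⊗n} over GF(2) and A closed under bitwise domination. The map φ : GF(2)^A → GF(2)^A given by φ(u_A) = u_A · G_{AA} is a linear bijection with φ ∘ φ = id. -/
open Matrix

lemma and_eq_right_iff (a b : ℕ) : a &&& b = b ↔ ∀ i, b.testBit i = true → a.testBit i = true := by
  constructor
  · intro h i hi
    have := congrArg (fun x => Nat.testBit x i) h
    simp only [Nat.testBit_and, hi, Bool.and_true] at this
    exact this
  · intro h
    apply Nat.eq_of_testBit_eq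
    intro i
    rw [Nat.testBit_and]
    cases hb : b.testBit i
    · simp
    · simp [h i hb]

lemma dom_antisymm_s17 {a b : ℕ} (h1 : a &&& b = b) (h2 : b &&& a = a) : a = b := by
  rw [and_eq_right_iff] at h1 h2
  apply Nat.eq_of_testBit_eq
  intro i
  rcases hb : b.testBit i with _ | _
  · rcases ha : a.testBit i with _ | _
    · rfl
    · exact absurd (h2 i ha) (by simp [hb])
  · simp [h1 i hb, hb]

lemma GAA_sq (n : ℕ) (A : Finset (Fin (2 ^ n)))
    (hA : ∀ j ∈ A, ∀ i : Fin (2 ^ n), i.val &&& j.val = j.val → i ∈ A) :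
    (Matrix.of fun (i j : A) => G n i.val j.val) * (Matrix.of fun (i j : A) => G n i.val j.val) = 1 := by
  ext i j
  rw [Matrix.mul_apply]
  simp only [Matrix.of_apply, G]
  simp only [ite_mul, one_mul, zero_mul, ← ite_and]
  by_cases hij : i = j
  · subst hij
    rw [Matrix.one_apply_eq]
    rw [Finset.sum_eq_single_of_mem i (Finset.mem_univ i)]
    · simp [Nat.and_self]
    · intro k _ hk
      rw [if_neg]
      rintro ⟨h1, h2⟩
      exact hk (Subtype.ext (Fin.ext (dom_antisymm_s17 h2 h1)))
  · rw [Matrix.one_apply_ne hij]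
    by_cases hb : ∃ b, (i : Fin (2 ^ n)).val.testBit b = true ∧ (j : Fin (2 ^ n)).val.testBit b = false
    · obtain ⟨b, hib, hjb⟩ := hb
      have hblt : b < n := by
        by_contra hbn
        have : (i : Fin (2 ^ n)).val < 2 ^ b :=
          lt_of_lt_of_le (i : Fin (2 ^ n)).isLt (Nat.pow_le_pow_right (by norm_num) (le_of_not_gt hbn))
        rw [Nat.testBit_lt_two_pow this] at hib
        exact Bool.false_ne_true hib
      have h2b : (2 : ℕ) ^ b < 2 ^ n := Nat.pow_lt_pow_right (by norm_num) hblt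
      rw [← Finset.sum_filter]
      set P : A → Prop := fun k =>
        (i : Fin (2 ^ n)).val &&& (k : Fin (2 ^ n)).val = (k : Fin (2 ^ n)).val ∧
        (k : Fin (2 ^ n)).val &&& (j : Fin (2 ^ n)).val = (j : Fin (2 ^ n)).val with hP
      have hlt : ∀ k : A, (k : Fin (2 ^ n)).val ^^^ 2 ^ b < 2 ^ n :=
        fun k => Nat.xor_lt_two_pow (k : Fin (2 ^ n)).isLt h2b
      have key : ∀ k : A, k ∈ Finset.univ.filter P →
          (i : Fin (2 ^ n)).val &&& ((k : Fin (2 ^ n)).val ^^^ 2 ^ b) = (k : Fin (2 ^ n)).val ^^^ 2 ^ b ∧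
          ((k : Fin (2 ^ n)).val ^^^ 2 ^ b) &&& (j : Fin (2 ^ n)).val = (j : Fin (2 ^ n)).val := by
        intro k hk
        rw [Finset.mem_filter] at hk
        obtain ⟨-, hki, hjk⟩ := hk
        constructor
        · rw [and_eq_right_iff]
          intro c hc
          rw [Nat.testBit_xor, Nat.testBit_two_pow] at hc
          by_cases hcb : b = c
          · exact hcb ▸ hib
          · simp only [hcb, decide_false, Bool.xor_false] at hc
            exact (and_eq_right_iff _ _).mp hki c hc
        · rw [and_eq_right_iff]
          intro c hc
          rw [Nat.testBit_xor, Nat.testBit_two_pow]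
          by_cases hcb : b = c
          · rw [← hcb] at hc; rw [hjb] at hc; exact absurd hc (by simp)
          · simp only [hcb, decide_false, Bool.xor_false]
            exact (and_eq_right_iff _ _).mp hjk c hc
      have memA : ∀ k : A, k ∈ Finset.univ.filter P →
          (⟨(k : Fin (2 ^ n)).val ^^^ 2 ^ b, hlt k⟩ : Fin (2 ^ n)) ∈ A :=
        fun k hk => hA _ (j : A).property _ (key k hk).2
      refine Finset.sum_involution
        (fun k hk => (⟨⟨(k : Fin (2 ^ n)).val ^^^ 2 ^ b, hlt k⟩, memA k hk⟩ : A))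
        (fun _ _ => by decide) ?_ ?_ ?_
      · intro k hk _ heq
        have := congrArg (fun x : A => (x : Fin (2 ^ n)).val.testBit b) heq
        simp only [Nat.testBit_xor, Nat.testBit_two_pow, decide_true, Bool.xor_true] at this
        cases h : ((k : Fin (2 ^ n)).val.testBit b) <;> simp [h] at this
      · intro k hk
        rw [Finset.mem_filter]
        exact ⟨Finset.mem_univ _, (key k hk).1, (key k hk).2⟩
      · intro k hk
        apply Subtype.ext; apply Fin.ext
        show ((k : Fin (2 ^ n)).val ^^^ 2 ^ b) ^^^ 2 ^ b = (k : Fin (2 ^ n)).val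
        rw [Nat.xor_assoc, Nat.xor_self, Nat.xor_zero]
    · apply Finset.sum_eq_zero
      intro k _
      rw [if_neg]
      rintro ⟨h1, h2⟩
      push_neg at hb
      apply hij
      apply Subtype.ext; apply Fin.ext
      apply dom_antisymm_s17
      · rw [and_eq_right_iff] at h1 h2 ⊢
        intro c hc
        exact h1 c (h2 c hc)
      · rw [and_eq_right_iff]
        intro c hc
        rcases hx : (j : Fin (2 ^ n)).val.testBit c with _ | _
        · exact absurd hx (hb c hc)
        · rfl

/-- The map φ(u_A) = u_A·G_{AA} is a linear bijection with φ ∘ φ = id. -/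
theorem phi_linear_involution (n : ℕ) (A : Finset (Fin (2 ^ n)))
    (hA : ∀ j ∈ A, ∀ i : Fin (2 ^ n), i.val &&& j.val = j.val → i ∈ A) :
    let GAA : Matrix A A (ZMod 2) := Matrix.of fun i j => G n i.val j.val
    let φ : (A → ZMod 2) → (A → ZMod 2) := fun uA => uA ᵥ* GAA
    Function.Bijective φ ∧
    (∀ x y : A → ZMod 2, φ (x + y) = φ x + φ y) ∧
    (∀ (c : ZMod 2) (x : A → ZMod 2), φ (c • x) = c • φ x) ∧
    φ ∘ φ = id := by
  intro GAA φ
  have hsq : GAA * GAA = 1 := GAA_sq n A hA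
  have hcomp : φ ∘ φ = id := by
    funext u
    show (u ᵥ* GAA) ᵥ* GAA = u
    rw [Matrix.vecMul_vecMul, hsq, Matrix.vecMul_one]
  refine ⟨?_, ?_, ?_, hcomp⟩
  · exact Function.Involutive.bijective (fun u => congrFun hcomp u)
  · intro x y; exact Matrix.add_vecMul GAA x y
  · intro c x
    exact (GAA.vecMulLinear).map_smul c x
end
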